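/- arXiv:2207.12216 — 4 statements merged into one kernel-verified Lean document; each statement's English description precedes it below -/
import Mathlib

section
/- If f, g ∈ S^2, then the product fg ∈ S^2, and moreover ‖(fg)'‖_{H^2} ≤ (2π√3/3) ‖f‖_{S^2} ‖g‖_{S^2}. -/
open Metric Filter

noncomputable def taylorCoeff (f : ℂ → ℂ) (n : ℕ) : ℂ :=
  iteratedDeriv n f 0 / n.factorial

/-- Membership in `S²`: `f` is analytic on the open unit disk, equals its Taylor
series there, and its coefficients satisfy `Σ n² |a n|² < ∞`. -/
def MemS2 (f : ℂ → ℂ) : Prop :=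
  AnalyticOn ℂ f (ball (0:ℂ) 1) ∧
  (∀ z ∈ ball (0:ℂ) 1, HasSum (fun n : ℕ => taylorCoeff f n * z ^ n) (f z)) ∧
  Summable (fun n : ℕ => ((n : ℝ))^2 * ‖taylorCoeff f n‖^2)

/-- The square of the `S²` norm: `|a₀|² + Σ_{n≥1} n² |aₙ|²`. -/
noncomputable def s2NormSq (f : ℂ → ℂ) : ℝ :=
  ‖taylorCoeff f 0‖^2 + ∑' n : ℕ, ((n : ℝ) + 1)^2 * ‖taylorCoeff f (n+1)‖^2

noncomputable def s2Norm (f : ℂ → ℂ) : ℝ := Real.sqrt (s2NormSq f)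

/-- The square of the `H²` norm, in terms of Taylor coefficients. -/
noncomputable def h2NormSq (f : ℂ → ℂ) : ℝ := ∑' n : ℕ, ‖taylorCoeff f n‖^2

noncomputable def h2Norm (f : ℂ → ℂ) : ℝ := Real.sqrt (h2NormSq f)

/-- An operator on functions is bounded on `S²`. -/
def BoundedOpS2 (T : (ℂ → ℂ) → (ℂ → ℂ)) : Prop :=
  (∀ f, MemS2 f → MemS2 (T f)) ∧
  ∃ C : ℝ, ∀ f, MemS2 f → s2Norm (T f) ≤ C * s2Norm f

/-- The operator norm of an operator on `S²`. -/
noncomputable def opNormS2 (T : (ℂ → ℂ) → (ℂ → ℂ)) : ℝ :=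
  sInf {C : ℝ | 0 ≤ C ∧ ∀ f, MemS2 f → s2Norm (T f) ≤ C * s2Norm f}

/-- An (analytic) automorphism of the unit disk. -/
def IsDiskAut (φ : ℂ → ℂ) : Prop :=
  AnalyticOn ℂ φ (ball (0:ℂ) 1) ∧ Set.BijOn φ (ball (0:ℂ) 1) (ball (0:ℂ) 1)

/-!
Write `a`, `b` for the Taylor coefficients of `f`, `g`. The coefficients of `fg` are the Cauchy
product `c = a ⋆ b`, and `n cₙ = ((k aₖ) ⋆ b)ₙ + (a ⋆ (k bₖ))ₙ`. Young's inequality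
`‖u ⋆ w‖₂ ≤ ‖u‖₂ ‖w‖₁` and Minkowski's inequality give
`‖(n cₙ)‖₂ ≤ ‖(n aₙ)‖₂ ‖b‖₁ + ‖(n bₙ)‖₂ ‖a‖₁`. Cauchy–Schwarz against `∑ 1/n² = π²/6` gives
`‖a‖₁ ≤ |a₀| + (π/√6) ‖(n aₙ)‖₂`, which is at most `(π/√3) ‖f‖_{S²}` since `1 + π²/6 ≤ π²/3`.
-/

open Finset Real

def cauchyProduct {R : Type*} [Semiring R] (a b : ℕ → R) (n : ℕ) : R :=
  ∑ k ∈ range (n + 1), a k * b (n - k)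

theorem tsum_succ_eq_tsum_of_apply_zero {G : Type*} [AddCommGroup G] [TopologicalSpace G]
    [IsTopologicalAddGroup G] [T2Space G] {f : ℕ → G} (hf : f 0 = 0) :
    ∑' n, f (n + 1) = ∑' n, f n := by
  by_cases hs : Summable f
  · rw [hs.tsum_eq_zero_add, hf, zero_add]
  · rw [tsum_eq_zero_of_not_summable hs, tsum_eq_zero_of_not_summable]
    rwa [summable_nat_add_iff 1]

section CauchyProduct

variable {R : Type*}

theorem cauchyProduct_comm [CommSemiring R] (a b : ℕ → R) (n : ℕ) :
    cauchyProduct a b n = cauchyProduct b a n := by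
  rw [cauchyProduct, ← sum_range_reflect]
  refine sum_congr rfl fun k hk => ?_
  rw [Nat.add_sub_cancel, Nat.sub_sub_self (Nat.le_of_lt_succ (mem_range.1 hk)), mul_comm]

theorem natCast_mul_cauchyProduct [CommSemiring R] (a b : ℕ → R) (n : ℕ) :
    (n : R) * cauchyProduct a b n =
      cauchyProduct (fun k => k * a k) b n + cauchyProduct a (fun k => k * b k) n := by
  simp only [cauchyProduct, mul_sum, ← sum_add_distrib]
  refine sum_congr rfl fun k hk => ?_
  have hn : (n : R) = k + (n - k : ℕ) := by
    rw [← Nat.cast_add, Nat.add_sub_cancel' (Nat.le_of_lt_succ (mem_range.1 hk))]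
  rw [hn]
  ring

theorem norm_cauchyProduct_le [SeminormedRing R] (a b : ℕ → R) (n : ℕ) :
    ‖cauchyProduct a b n‖ ≤ cauchyProduct (‖a ·‖) (‖b ·‖) n :=
  (norm_sum_le _ _).trans (sum_le_sum fun _ _ => norm_mul_le _ _)

theorem summable_norm_mul_pow_of_norm_le_one [SeminormedRing R] [NormOneClass R] {a : ℕ → R} {z : R}
    (ha : Summable (‖a ·‖)) (hz : ‖z‖ ≤ 1) : Summable fun n => ‖a n * z ^ n‖ :=
  ha.of_nonneg_of_le (fun _ => norm_nonneg _) fun n =>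
    (norm_mul_le _ _).trans <| mul_le_of_le_one_right (norm_nonneg _) <|
      (norm_pow_le z n).trans (pow_le_one₀ (norm_nonneg z) hz)

theorem hasSum_cauchyProduct_mul_pow [NormedCommRing R] [CompleteSpace R] {a b : ℕ → R}
    {z x y : R} (ha : Summable fun n => ‖a n * z ^ n‖) (hb : Summable fun n => ‖b n * z ^ n‖)
    (hx : HasSum (fun n => a n * z ^ n) x) (hy : HasSum (fun n => b n * z ^ n) y) :
    HasSum (fun n => cauchyProduct a b n * z ^ n) (x * y) := by
  have h := hasSum_sum_range_mul_of_summable_norm ha hb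
  rw [hx.tsum_eq, hy.tsum_eq] at h
  refine h.congr_fun fun n => ?_
  rw [cauchyProduct, sum_mul]
  refine sum_congr rfl fun k hk => ?_
  rw [← pow_sub_mul_pow z (Nat.le_of_lt_succ (mem_range.1 hk))]
  ring

end CauchyProduct

section SquareSummable

variable {ι : Type*} {x y : ι → ℝ}

theorem summable_mul_and_tsum_mul_le_sqrt_mul_sqrt (hx0 : ∀ i, 0 ≤ x i) (hy0 : ∀ i, 0 ≤ y i)
    (hx : Summable fun i => x i ^ 2) (hy : Summable fun i => y i ^ 2) :
    Summable (fun i => x i * y i) ∧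
      ∑' i, x i * y i ≤ √(∑' i, x i ^ 2) * √(∑' i, y i ^ 2) := by
  simpa [sqrt_eq_rpow] using summable_and_inner_le_Lp_mul_Lq_tsum_of_nonneg .two_two hx0 hy0
    (by simpa using hx) (by simpa using hy)

theorem summable_sq_and_sqrt_tsum_sq_le_of_le_add {z : ι → ℝ} (hx0 : ∀ i, 0 ≤ x i)
    (hy0 : ∀ i, 0 ≤ y i) (hz0 : ∀ i, 0 ≤ z i) (hxyz : ∀ i, x i ≤ y i + z i)
    (hy : Summable fun i => y i ^ 2) (hz : Summable fun i => z i ^ 2) :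
    Summable (fun i => x i ^ 2) ∧ √(∑' i, x i ^ 2) ≤ √(∑' i, y i ^ 2) + √(∑' i, z i ^ 2) := by
  obtain ⟨hyz, hle⟩ : Summable (fun i => (y i + z i) ^ 2) ∧
      √(∑' i, (y i + z i) ^ 2) ≤ √(∑' i, y i ^ 2) + √(∑' i, z i ^ 2) := by
    simpa [sqrt_eq_rpow] using Lp_add_le_tsum_of_nonneg one_le_two hy0 hz0
      (by simpa using hy) (by simpa using hz)
  have hsq (i : ι) : x i ^ 2 ≤ (y i + z i) ^ 2 := pow_le_pow_left₀ (hx0 i) (hxyz i) 2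
  have hx : Summable (fun i => x i ^ 2) := hyz.of_nonneg_of_le (fun _ => sq_nonneg _) hsq
  exact ⟨hx, (sqrt_le_sqrt (hx.tsum_le_tsum hsq hyz)).trans hle⟩

end SquareSummable

theorem cauchyProduct_sq_le_tsum_mul {u b : ℕ → ℝ} (hb0 : ∀ n, 0 ≤ b n) (hb : Summable b)
    (n : ℕ) : cauchyProduct u b n ^ 2 ≤ (∑' k, b k) * cauchyProduct (u · ^ 2) b n := by
  calc cauchyProduct u b n ^ 2
      ≤ (∑ k ∈ range (n + 1), b (n - k)) * cauchyProduct (u · ^ 2) b n :=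
        sum_sq_le_sum_mul_sum_of_sq_le_mul _ (fun _ _ => hb0 _)
          (fun _ _ => mul_nonneg (sq_nonneg _) (hb0 _)) fun _ _ => (by ring : _ = _).le
    _ ≤ (∑' k, b k) * cauchyProduct (u · ^ 2) b n := by
        gcongr
        · exact sum_nonneg fun _ _ => mul_nonneg (sq_nonneg _) (hb0 _)
        · rw [show ∑ k ∈ range (n + 1), b (n - k) = ∑ k ∈ range (n + 1), b k by
            simpa using sum_range_reflect b (n + 1)]
          exact hb.sum_le_tsum _ fun k _ => hb0 k

theorem summable_cauchyProduct_sq_and_sqrt_tsum_le {u b : ℕ → ℝ} (hb0 : ∀ n, 0 ≤ b n)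
    (hu : Summable fun n => u n ^ 2) (hb : Summable b) :
    Summable (fun n => cauchyProduct u b n ^ 2) ∧
      √(∑' n, cauchyProduct u b n ^ 2) ≤ √(∑' n, u n ^ 2) * ∑' n, b n := by
  have hconv : HasSum (cauchyProduct (u · ^ 2) b) ((∑' n, u n ^ 2) * ∑' n, b n) :=
    hasSum_sum_range_mul_of_summable_norm (by simpa using hu)
      (by simpa [abs_of_nonneg (hb0 _)] using hb)
  have hdom := hconv.summable.mul_left (∑' n, b n)
  have hsum : Summable (fun n => cauchyProduct u b n ^ 2) :=
    hdom.of_nonneg_of_le (fun _ => sq_nonneg _) (cauchyProduct_sq_le_tsum_mul hb0 hb)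
  refine ⟨hsum, ?_⟩
  calc √(∑' n, cauchyProduct u b n ^ 2)
      ≤ √(∑' n, (∑' k, b k) * cauchyProduct (u · ^ 2) b n) :=
        sqrt_le_sqrt (hsum.tsum_le_tsum (cauchyProduct_sq_le_tsum_mul hb0 hb) hdom)
    _ = √((∑' n, u n ^ 2) * (∑' n, b n) ^ 2) := by rw [tsum_mul_left, hconv.tsum_eq]; ring_nf
    _ = √(∑' n, u n ^ 2) * ∑' n, b n := by
        rw [sqrt_mul (tsum_nonneg fun _ => sq_nonneg _), sqrt_sq (tsum_nonneg hb0)]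

theorem add_pi_div_sqrt_six_mul_le (x y : ℝ) :
    x + π / √6 * y ≤ π / √3 * √(x ^ 2 + y ^ 2) := by
  have h6 : (π / √6) ^ 2 = π ^ 2 / 6 := by rw [div_pow, sq_sqrt (by norm_num)]
  have h3 : (π / √3) ^ 2 = π ^ 2 / 3 := by rw [div_pow, sq_sqrt (by norm_num)]
  have hπ : 6 ≤ π ^ 2 := by nlinarith [pi_gt_three]
  refine (le_abs_self _).trans (abs_le_of_sq_le_sq ?_ (by positivity))
  rw [mul_pow, h3, sq_sqrt (by positivity)]
  nlinarith [sq_nonneg (π / √6 * x - y), sq_nonneg x, sq_nonneg y]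

section WeightedSequences

variable {E : Type*} [SeminormedAddCommGroup E] {a : ℕ → E}

theorem summable_norm_and_tsum_norm_le (ha : Summable fun n : ℕ => (n : ℝ) ^ 2 * ‖a n‖ ^ 2) :
    Summable (‖a ·‖) ∧
      ∑' n, ‖a n‖ ≤ ‖a 0‖ + π / √6 * √(∑' n : ℕ, (n : ℝ) ^ 2 * ‖a n‖ ^ 2) := by
  -- `1 / (0 : ℝ) = 0`, so the weight `1 / n` discards the term `a 0`.
  have hCS := summable_mul_and_tsum_mul_le_sqrt_mul_sqrt (x := fun n : ℕ => 1 / (n : ℝ))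
    (y := fun n => n * ‖a n‖) (fun _ => by positivity) (fun _ => by positivity)
    (by simp) (by simpa [mul_pow] using ha)
  have hxy (n : ℕ) : 1 / ((n + 1 : ℕ) : ℝ) * ((n + 1 : ℕ) * ‖a (n + 1)‖) = ‖a (n + 1)‖ := by
    field_simp
  have hsum : Summable (‖a ·‖) :=
    (summable_nat_add_iff 1).1 (((summable_nat_add_iff 1).2 hCS.1).congr hxy)
  have hzeta : √(∑' n : ℕ, (1 / (n : ℝ)) ^ 2) = π / √6 := by
    simp_rw [one_div_pow, hasSum_zeta_two.tsum_eq, sqrt_div' _ (by norm_num : (0 : ℝ) ≤ 6),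
      sqrt_sq pi_pos.le]
  refine ⟨hsum, ?_⟩
  calc ∑' n, ‖a n‖ = ‖a 0‖ + ∑' n : ℕ, 1 / (n : ℝ) * (n * ‖a n‖) := by
        rw [hsum.tsum_eq_zero_add, hCS.1.tsum_eq_zero_add, tsum_congr hxy]; simp
    _ ≤ ‖a 0‖ + π / √6 * √(∑' n : ℕ, (n : ℝ) ^ 2 * ‖a n‖ ^ 2) := by
        rw [← hzeta]
        simpa only [mul_pow] using add_le_add_right hCS.2 _

theorem tsum_norm_le_pi_div_sqrt_three_mul
    (ha : Summable fun n : ℕ => (n : ℝ) ^ 2 * ‖a n‖ ^ 2) :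
    ∑' n, ‖a n‖ ≤ π / √3 * √(‖a 0‖ ^ 2 + ∑' n : ℕ, (n : ℝ) ^ 2 * ‖a n‖ ^ 2) := by
  have h := add_pi_div_sqrt_six_mul_le ‖a 0‖ √(∑' n : ℕ, (n : ℝ) ^ 2 * ‖a n‖ ^ 2)
  rw [sq_sqrt (tsum_nonneg fun _ => by positivity)] at h
  exact (summable_norm_and_tsum_norm_le ha).2.trans h

end WeightedSequences

section Coefficients

variable {𝕜 : Type*} [RCLike 𝕜]

theorem natCast_mul_norm_cauchyProduct_le (a b : ℕ → 𝕜) (n : ℕ) :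
    n * ‖cauchyProduct a b n‖ ≤ cauchyProduct (fun k => k * ‖a k‖) (‖b ·‖) n +
      cauchyProduct (fun k => k * ‖b k‖) (‖a ·‖) n := by
  calc n * ‖cauchyProduct a b n‖
      = ‖cauchyProduct (fun k => k * a k) b n + cauchyProduct a (fun k => k * b k) n‖ := by
        rw [← natCast_mul_cauchyProduct, norm_mul, RCLike.norm_natCast]
    _ ≤ cauchyProduct (fun k => ‖(k : 𝕜) * a k‖) (‖b ·‖) n +
          cauchyProduct (‖a ·‖) (fun k => ‖(k : 𝕜) * b k‖) n :=
        (norm_add_le _ _).trans (add_le_add (norm_cauchyProduct_le _ _ n)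
          (norm_cauchyProduct_le _ _ n))
    _ = _ := by simp only [norm_mul, RCLike.norm_natCast, cauchyProduct_comm (‖a ·‖)]

theorem summable_and_sqrt_tsum_cauchyProduct_le {a b : ℕ → 𝕜}
    (ha : Summable fun n : ℕ => (n : ℝ) ^ 2 * ‖a n‖ ^ 2)
    (hb : Summable fun n : ℕ => (n : ℝ) ^ 2 * ‖b n‖ ^ 2) :
    Summable (fun n : ℕ => (n : ℝ) ^ 2 * ‖cauchyProduct a b n‖ ^ 2) ∧
      √(∑' n : ℕ, (n : ℝ) ^ 2 * ‖cauchyProduct a b n‖ ^ 2) ≤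
        2 * π / √3 * (√(‖a 0‖ ^ 2 + ∑' n : ℕ, (n : ℝ) ^ 2 * ‖a n‖ ^ 2) *
          √(‖b 0‖ ^ 2 + ∑' n : ℕ, (n : ℝ) ^ 2 * ‖b n‖ ^ 2)) := by
  have ha' : Summable fun n : ℕ => ((n : ℝ) * ‖a n‖) ^ 2 := by simpa only [mul_pow] using ha
  have hb' : Summable fun n : ℕ => ((n : ℝ) * ‖b n‖) ^ 2 := by simpa only [mul_pow] using hb
  obtain ⟨hE, hEle⟩ := summable_cauchyProduct_sq_and_sqrt_tsum_le (fun _ => norm_nonneg _) ha'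
    (summable_norm_and_tsum_norm_le hb).1
  obtain ⟨hH, hHle⟩ := summable_cauchyProduct_sq_and_sqrt_tsum_le (fun _ => norm_nonneg _) hb'
    (summable_norm_and_tsum_norm_le ha).1
  obtain ⟨hsum, hle⟩ := summable_sq_and_sqrt_tsum_sq_le_of_le_add
    (x := fun n : ℕ => (n : ℝ) * ‖cauchyProduct a b n‖)
    (y := cauchyProduct (fun k => k * ‖a k‖) (‖b ·‖))
    (z := cauchyProduct (fun k => k * ‖b k‖) (‖a ·‖)) (fun _ => by positivity)
    (fun _ => sum_nonneg fun _ _ => by positivity) (fun _ => sum_nonneg fun _ _ => by positivity)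
    (natCast_mul_norm_cauchyProduct_le a b) hE hH
  refine ⟨by simpa only [mul_pow] using hsum, ?_⟩
  set Sa := √(‖a 0‖ ^ 2 + ∑' n : ℕ, (n : ℝ) ^ 2 * ‖a n‖ ^ 2)
  set Sb := √(‖b 0‖ ^ 2 + ∑' n : ℕ, (n : ℝ) ^ 2 * ‖b n‖ ^ 2)
  have hDa : √(∑' n : ℕ, ((n : ℝ) * ‖a n‖) ^ 2) ≤ Sa := by
    simpa only [mul_pow] using sqrt_le_sqrt (le_add_of_nonneg_left (sq_nonneg ‖a 0‖))
  have hDb : √(∑' n : ℕ, ((n : ℝ) * ‖b n‖) ^ 2) ≤ Sb := by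
    simpa only [mul_pow] using sqrt_le_sqrt (le_add_of_nonneg_left (sq_nonneg ‖b 0‖))
  calc √(∑' n : ℕ, (n : ℝ) ^ 2 * ‖cauchyProduct a b n‖ ^ 2)
      = √(∑' n : ℕ, ((n : ℝ) * ‖cauchyProduct a b n‖) ^ 2) := by simp only [mul_pow]
    _ ≤ √(∑' n : ℕ, ((n : ℝ) * ‖a n‖) ^ 2) * ∑' n, ‖b n‖ +
          √(∑' n : ℕ, ((n : ℝ) * ‖b n‖) ^ 2) * ∑' n, ‖a n‖ :=
        hle.trans (add_le_add hEle hHle)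
    _ ≤ Sa * (π / √3 * Sb) + Sb * (π / √3 * Sa) := by
        gcongr
        exacts [tsum_norm_le_pi_div_sqrt_three_mul hb, tsum_norm_le_pi_div_sqrt_three_mul ha]
    _ = 2 * π / √3 * (Sa * Sb) := by ring

end Coefficients

theorem taylorCoeff_deriv (f : ℂ → ℂ) (n : ℕ) :
    taylorCoeff (deriv f) n = (n + 1) * taylorCoeff f (n + 1) := by
  rw [taylorCoeff, taylorCoeff, ← iteratedDeriv_succ', Nat.factorial_succ]
  push_cast
  field_simp

theorem taylorCoeff_mul {f g : ℂ → ℂ} {n : ℕ} (hf : ContDiffAt ℂ n f 0)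
    (hg : ContDiffAt ℂ n g 0) :
    taylorCoeff (fun z => f z * g z) n =
      cauchyProduct (taylorCoeff f) (taylorCoeff g) n := by
  rw [taylorCoeff, iteratedDeriv_fun_mul hf hg, sum_div]
  refine sum_congr rfl fun k hk => ?_
  have hkn : k ≤ n := Nat.le_of_lt_succ (mem_range.1 hk)
  have hchoose : (n.choose k : ℂ) ≠ 0 := Nat.cast_ne_zero.2 (Nat.choose_pos hkn).ne'
  rw [taylorCoeff, taylorCoeff, ← Nat.choose_mul_factorial_mul_factorial hkn]
  push_cast
  field_simp

theorem h2NormSq_deriv (f : ℂ → ℂ) :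
    h2NormSq (deriv f) = ∑' n : ℕ, (n : ℝ) ^ 2 * ‖taylorCoeff f n‖ ^ 2 := by
  rw [h2NormSq, ← tsum_succ_eq_tsum_of_apply_zero
    (f := fun n : ℕ => (n : ℝ) ^ 2 * ‖taylorCoeff f n‖ ^ 2) (by simp)]
  refine tsum_congr fun n => ?_
  rw [taylorCoeff_deriv, norm_mul, mul_pow]
  norm_cast

theorem s2Norm_eq (f : ℂ → ℂ) :
    s2Norm f = √(‖taylorCoeff f 0‖ ^ 2 + ∑' n : ℕ, (n : ℝ) ^ 2 * ‖taylorCoeff f n‖ ^ 2) := by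
  rw [s2Norm, s2NormSq, ← tsum_succ_eq_tsum_of_apply_zero
    (f := fun n : ℕ => (n : ℝ) ^ 2 * ‖taylorCoeff f n‖ ^ 2) (by simp)]
  push_cast
  rfl

theorem product_mem_s2_and_deriv_h2_bound (f g : ℂ → ℂ) (hf : MemS2 f) (hg : MemS2 g) :
    MemS2 (fun z => f z * g z) ∧
      h2Norm (deriv (fun z => f z * g z)) ≤
        (2 * Real.pi / Real.sqrt 3) * (s2Norm f * s2Norm g) := by
  obtain ⟨hfa, hfs, hfsum⟩ := hf
  obtain ⟨hga, hgs, hgsum⟩ := hg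
  have hcoeff : taylorCoeff (fun z => f z * g z) = cauchyProduct (taylorCoeff f) (taylorCoeff g) :=
    funext fun n => taylorCoeff_mul
      ((isOpen_ball.analyticOn_iff_analyticOnNhd.1 hfa 0 (mem_ball_self one_pos)).contDiffAt)
      ((isOpen_ball.analyticOn_iff_analyticOnNhd.1 hga 0 (mem_ball_self one_pos)).contDiffAt)
  obtain ⟨hsum, hbound⟩ := summable_and_sqrt_tsum_cauchyProduct_le hfsum hgsum
  refine ⟨⟨hfa.mul hga, fun z hz => ?_, hcoeff ▸ hsum⟩, ?_⟩
  · have hz1 : ‖z‖ ≤ 1 := (mem_ball_zero_iff.1 hz).le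
    rw [hcoeff]
    exact hasSum_cauchyProduct_mul_pow
      (summable_norm_mul_pow_of_norm_le_one (summable_norm_and_tsum_norm_le hfsum).1 hz1)
      (summable_norm_mul_pow_of_norm_le_one (summable_norm_and_tsum_norm_le hgsum).1 hz1)
      (hfs z hz) (hgs z hz)
  · rw [h2Norm, h2NormSq_deriv, hcoeff, s2Norm_eq, s2Norm_eq]
    exact hbound
end

section
/- If f ∈ S^2 and w ∈ D is a zero of f of order n ≥ 1, then there exists g ∈ S^2 with g(w) ≠ 0 and f(z) = (z−w)^n g(z) for all z ∈ D. -/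
open Metric Filter

/-! For `w` in the disk, `g = dslope f w` (that is `(f z - f w) / (z - w)`) has Taylor
coefficients `b k = ∑ⱼ a (k + 1 + j) wʲ`, where `a` are those of `f`: they satisfy
`a (k + 1) = b k - w b (k + 1)`, and the remainder `wᴺ b (k + N)` tends to zero. Hence
`k ‖b k‖ ≤ ∑ⱼ (k + 1 + j) ‖a (k + 1 + j)‖ ‖w‖ʲ`, an operator bounded on `ℓ²` because `‖w‖ < 1`,
so `dslope · w` maps `S²` into itself. Applying it `n` times to `f` gives `g`: the `k`-th iterate
takes the value `f⁽ᵏ⁾(w) / k!` at `w`, so the vanishing of the first `n` derivatives yields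
`f z = (z - w)ⁿ g z`, and `f⁽ⁿ⁾(w) ≠ 0` yields `g w ≠ 0`. -/

open Function
open scoped Nat ENNReal Topology

namespace ENNReal

lemma mul_le_sq_add_sq (a b : ℝ≥0∞) : a * b ≤ a ^ 2 + b ^ 2 := by
  rcases le_total a b with h | h
  · calc a * b ≤ b * b := mul_le_mul_left h b
      _ ≤ a ^ 2 + b ^ 2 := by rw [← sq]; exact le_add_self
  · calc a * b ≤ a * a := mul_le_mul_right h a
      _ ≤ a ^ 2 + b ^ 2 := by rw [← sq]; exact le_self_add

lemma sq_tsum_mul_le {ι : Type*} (x y : ι → ℝ≥0∞) :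
    (∑' i, x i * y i) ^ 2 ≤ 2 * ((∑' i, y i) * ∑' i, x i ^ 2 * y i) := by
  calc (∑' i, x i * y i) ^ 2 = ∑' i, ∑' j, (x i * x j) * (y i * y j) := by
        simp_rw [sq, ← ENNReal.tsum_mul_right, ← ENNReal.tsum_mul_left]
        refine tsum_congr fun i => tsum_congr fun j => ?_
        ring
    _ ≤ ∑' i, ∑' j, (x i ^ 2 + x j ^ 2) * (y i * y j) := by
        gcongr with i j
        exact mul_le_sq_add_sq _ _
    _ = ∑' i, ∑' j, x i ^ 2 * y i * y j + ∑' i, ∑' j, x j ^ 2 * y j * y i := by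
        rw [← ENNReal.tsum_add]
        refine tsum_congr fun i => ?_
        rw [← ENNReal.tsum_add]
        refine tsum_congr fun j => ?_
        ring
    _ = 2 * ((∑' i, y i) * ∑' i, x i ^ 2 * y i) := by
        rw [ENNReal.tsum_comm (f := fun i j => x j ^ 2 * y j * y i)]
        simp only [ENNReal.tsum_mul_left, ENNReal.tsum_mul_right]
        ring

lemma tsum_sq_tsum_shift_mul_pow_le (c : ℕ → ℝ≥0∞) (r : ℝ≥0∞) :
    ∑' k, (∑' j, c (k + 1 + j) * r ^ j) ^ 2 ≤ 2 * (∑' j, r ^ j) ^ 2 * ∑' m, c m ^ 2 := by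
  have hshift (j : ℕ) : ∑' k, c (k + 1 + j) ^ 2 ≤ ∑' m, c m ^ 2 := by
    simpa only [add_assoc] using
      ENNReal.tsum_comp_le_tsum_of_injective (add_left_injective (1 + j)) (c · ^ 2)
  calc ∑' k, (∑' j, c (k + 1 + j) * r ^ j) ^ 2
      ≤ ∑' k, 2 * ((∑' j, r ^ j) * ∑' j, c (k + 1 + j) ^ 2 * r ^ j) :=
        ENNReal.tsum_le_tsum fun k => sq_tsum_mul_le _ _
    _ = 2 * (∑' j, r ^ j) * ∑' j, (∑' k, c (k + 1 + j) ^ 2) * r ^ j := by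
        rw [ENNReal.tsum_mul_left, ENNReal.tsum_mul_left, ENNReal.tsum_comm]
        simp only [ENNReal.tsum_mul_right]
        ring
    _ ≤ 2 * (∑' j, r ^ j) * ∑' j, (∑' m, c m ^ 2) * r ^ j :=
        mul_le_mul_right (ENNReal.tsum_le_tsum fun j => mul_le_mul_left (hshift j) _) _
    _ = 2 * (∑' j, r ^ j) ^ 2 * ∑' m, c m ^ 2 := by
        rw [ENNReal.tsum_mul_left]
        ring

end ENNReal

lemma summable_natCast_sq_mul_norm_sq_iff {E : Type*} [SeminormedAddCommGroup E] (a : ℕ → E) :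
    Summable (fun n : ℕ => (n : ℝ) ^ 2 * ‖a n‖ ^ 2) ↔
      ∑' n : ℕ, ((n : ℝ≥0∞) * ‖a n‖ₑ) ^ 2 ≠ ∞ := by
  have h (n : ℕ) : ((n : ℝ≥0∞) * ‖a n‖ₑ) ^ 2 = (((n * ‖a n‖₊) ^ 2 : NNReal) : ℝ≥0∞) := by
    push_cast
    rfl
  simp_rw [h, ENNReal.tsum_coe_ne_top_iff_summable, ← NNReal.summable_coe]
  push_cast
  simp_rw [mul_pow]

lemma iteratedDeriv_succ_sub_mul {𝕜 : Type*} [NontriviallyNormedField 𝕜] {g : 𝕜 → 𝕜} {x : 𝕜}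
    (w : 𝕜) (k : ℕ) (hg : ContDiffAt 𝕜 (k + 1) g x) :
    iteratedDeriv (k + 1) (fun z => (z - w) * g z) x =
      (x - w) * iteratedDeriv (k + 1) g x + (k + 1) * iteratedDeriv k g x := by
  have hlin (i : ℕ) :
      iteratedDeriv i (fun z => z - w) = fun t => iteratedDeriv i (fun z => z) (t - w) :=
    iteratedDeriv_comp_sub_const i (fun z => z) w
  rw [iteratedDeriv_fun_mul (by fun_prop) hg, Finset.sum_range_succ', Finset.sum_range_succ',
    Finset.sum_eq_zero fun i _ => by simp [hlin, iteratedDeriv_fun_id]]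
  simp only [hlin, iteratedDeriv_fun_id, Nat.choose_zero_right, Nat.choose_one_right,
    one_ne_zero, ↓reduceIte, zero_add, add_tsub_cancel_right, tsub_zero, Nat.cast_add,
    Nat.cast_one, mul_one, one_mul]
  ring

lemma hasSum_taylorCoeff_mul_pow {f : ℂ → ℂ} {r : ℝ} (hf : DifferentiableOn ℂ f (ball 0 r))
    {z : ℂ} (hz : z ∈ ball 0 r) : HasSum (fun n => taylorCoeff f n * z ^ n) (f z) := by
  convert Complex.hasSum_taylorSeries_on_ball hf hz using 2 with n
  · rfl
  · simp only [taylorCoeff, sub_zero, smul_eq_mul]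
    ring

lemma memS2_iff {f : ℂ → ℂ} :
    MemS2 f ↔ DifferentiableOn ℂ f (ball 0 1) ∧
      ∑' n : ℕ, ((n : ℝ≥0∞) * ‖taylorCoeff f n‖ₑ) ^ 2 ≠ ∞ := by
  rw [MemS2, ← summable_natCast_sq_mul_norm_sq_iff, isOpen_ball.analyticOn_iff_analyticOnNhd]
  constructor
  · rintro ⟨hA, -, hS⟩
    exact ⟨hA.differentiableOn, hS⟩
  · rintro ⟨hD, hS⟩
    exact ⟨hD.analyticOnNhd isOpen_ball, fun z hz => hasSum_taylorCoeff_mul_pow hD hz, hS⟩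

lemma taylorCoeff_succ_eq_sub_mul {f g : ℂ → ℂ} {c w : ℂ} (hfg : ∀ z, f z = c + (z - w) * g z)
    (hg : AnalyticAt ℂ g 0) (k : ℕ) :
    taylorCoeff f (k + 1) = taylorCoeff g k - w * taylorCoeff g (k + 1) := by
  have hD : iteratedDeriv (k + 1) f 0 = iteratedDeriv (k + 1) (fun z => (z - w) * g z) 0 := by
    rw [funext hfg, iteratedDeriv_const_add k.succ_pos]
  rw [taylorCoeff, taylorCoeff, taylorCoeff, hD, iteratedDeriv_succ_sub_mul w k hg.contDiffAt,
    Nat.factorial_succ]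
  push_cast
  field_simp
  ring

section Recurrence

variable {𝕜 : Type*} [NormedField 𝕜] {a b : ℕ → 𝕜} {w : 𝕜}

lemma tendsto_pow_mul_shift_of_summable (hb : Summable fun m => b m * w ^ m) (k : ℕ) :
    Tendsto (fun N => w ^ N * b (k + N)) atTop (𝓝 0) := by
  rcases eq_or_ne w 0 with rfl | hw
  · refine tendsto_const_nhds.congr' ?_
    filter_upwards [eventually_ge_atTop 1] with N hN
    simp [zero_pow (by omega : N ≠ 0)]
  · have h := (hb.tendsto_atTop_zero.comp (tendsto_add_atTop_nat k)).div_const (w ^ k)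
    rw [zero_div] at h
    refine h.congr fun N => ?_
    simp only [comp_apply, pow_add, add_comm N k]
    field_simp

lemma enorm_le_tsum_of_eq_sub_mul (hab : ∀ k, a (k + 1) = b k - w * b (k + 1))
    (hb : Summable fun m => b m * w ^ m) (k : ℕ) :
    ‖b k‖ₑ ≤ ∑' j, ‖a (k + 1 + j)‖ₑ * ‖w‖ₑ ^ j := by
  have hpartial (N : ℕ) :
      b k = ∑ j ∈ Finset.range N, a (k + 1 + j) * w ^ j + w ^ N * b (k + N) := by
    induction N with
    | zero => simp
    | succ N ih =>
      rw [ih, Finset.sum_range_succ, ← add_assoc, add_right_comm k 1 N, hab]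
      ring
  have hbound (N : ℕ) :
      ‖b k‖ₑ ≤ ∑' j, ‖a (k + 1 + j)‖ₑ * ‖w‖ₑ ^ j + ‖w ^ N * b (k + N)‖ₑ := by
    calc ‖b k‖ₑ ≤ ∑ j ∈ Finset.range N, ‖a (k + 1 + j) * w ^ j‖ₑ + ‖w ^ N * b (k + N)‖ₑ := by
          rw [hpartial N]
          exact (enorm_add_le _ _).trans (by gcongr; exact enorm_sum_le _ _)
      _ ≤ _ := by
          simp_rw [enorm_mul, enorm_pow]
          gcongr
          exact ENNReal.sum_le_tsum _
  have hlim : Tendsto (fun N => ∑' j, ‖a (k + 1 + j)‖ₑ * ‖w‖ₑ ^ j + ‖w ^ N * b (k + N)‖ₑ)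
      atTop (𝓝 (∑' j, ‖a (k + 1 + j)‖ₑ * ‖w‖ₑ ^ j)) := by
    simpa using tendsto_const_nhds.add (tendsto_pow_mul_shift_of_summable hb k).enorm
  exact ge_of_tendsto' hlim hbound

lemma natCast_mul_enorm_le_tsum_of_eq_sub_mul (hab : ∀ k, a (k + 1) = b k - w * b (k + 1))
    (hb : Summable fun m => b m * w ^ m) (k : ℕ) :
    (k : ℝ≥0∞) * ‖b k‖ₑ ≤ ∑' j, ((k + 1 + j : ℕ) * ‖a (k + 1 + j)‖ₑ) * ‖w‖ₑ ^ j :=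
  calc (k : ℝ≥0∞) * ‖b k‖ₑ ≤ k * ∑' j, ‖a (k + 1 + j)‖ₑ * ‖w‖ₑ ^ j := by
        gcongr
        exact enorm_le_tsum_of_eq_sub_mul hab hb k
    _ = ∑' j, (k * ‖a (k + 1 + j)‖ₑ) * ‖w‖ₑ ^ j := by
        rw [← ENNReal.tsum_mul_left]
        simp only [mul_assoc]
    _ ≤ _ := by
        gcongr with j
        exact_mod_cast (by omega : k ≤ k + 1 + j)

end Recurrence

theorem memS2_dslope {f : ℂ → ℂ} (hf : MemS2 f) {w : ℂ} (hw : w ∈ ball (0 : ℂ) 1) :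
    MemS2 (dslope f w) := by
  rw [memS2_iff] at hf ⊢
  obtain ⟨hfd, hfS⟩ := hf
  have hgd : DifferentiableOn ℂ (dslope f w) (ball 0 1) :=
    (Complex.differentiableOn_dslope (isOpen_ball.mem_nhds hw)).2 hfd
  refine ⟨hgd, ?_⟩
  set a := taylorCoeff f
  set b := taylorCoeff (dslope f w)
  have hab : ∀ k, a (k + 1) = b k - w * b (k + 1) :=
    taylorCoeff_succ_eq_sub_mul (fun z => by rw [← smul_eq_mul, sub_smul_dslope]; ring)
      (hgd.analyticOnNhd isOpen_ball 0 (mem_ball_self one_pos))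
  have hb : Summable fun m => b m * w ^ m := (hasSum_taylorCoeff_mul_pow hgd hw).summable
  have hw1 : ‖w‖ₑ < 1 := by
    rw [← ofReal_norm]
    exact ENNReal.ofReal_lt_one.2 (mem_ball_zero_iff.1 hw)
  apply ne_top_of_lt
  calc ∑' k : ℕ, ((k : ℝ≥0∞) * ‖b k‖ₑ) ^ 2
      ≤ ∑' k : ℕ, (∑' j, ((k + 1 + j : ℕ) * ‖a (k + 1 + j)‖ₑ) * ‖w‖ₑ ^ j) ^ 2 :=
        ENNReal.tsum_le_tsum fun k =>
          pow_le_pow_left' (natCast_mul_enorm_le_tsum_of_eq_sub_mul hab hb k) 2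
    _ ≤ 2 * (∑' j, ‖w‖ₑ ^ j) ^ 2 * ∑' m : ℕ, ((m : ℝ≥0∞) * ‖a m‖ₑ) ^ 2 :=
        ENNReal.tsum_sq_tsum_shift_mul_pow_le (fun m => (m : ℝ≥0∞) * ‖a m‖ₑ) _
    _ < ∞ := ENNReal.mul_lt_top (ENNReal.mul_lt_top (by simp)
        (ENNReal.pow_lt_top (tsum_geometric_lt_top.2 hw1))) hfS.lt_top

theorem memS2_iterate_dslope {f : ℂ → ℂ} (hf : MemS2 f) {w : ℂ} (hw : w ∈ ball (0 : ℂ) 1)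
    (n : ℕ) : MemS2 ((swap dslope w)^[n] f) := by
  induction n with
  | zero => exact hf
  | succ n ih =>
    rw [iterate_succ_apply']
    exact memS2_dslope ih hw

section IterateDslope

variable {𝕜 E : Type*} [NontriviallyNormedField 𝕜] [NormedAddCommGroup E] [NormedSpace 𝕜 E]
  [CompleteSpace E] {f : 𝕜 → E}

lemma HasFPowerSeriesAt.factorial_smul_coeff {p : FormalMultilinearSeries 𝕜 𝕜 E} {x : 𝕜}
    (hp : HasFPowerSeriesAt f p x) (n : ℕ) : (n ! : 𝕜) • p.coeff n = iteratedDeriv n f x := by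
  obtain ⟨r, hr⟩ := hp
  rw [iteratedDeriv_eq_iteratedFDeriv, ← hr.factorial_smul 1 n, Nat.cast_smul_eq_nsmul]
  rfl

lemma AnalyticAt.factorial_smul_iterate_dslope_apply_self {w : 𝕜} (hf : AnalyticAt 𝕜 f w)
    (n : ℕ) : (n ! : 𝕜) • (swap dslope w)^[n] f w = iteratedDeriv n f w := by
  obtain ⟨p, hp⟩ := hf
  have hcoeff := FormalMultilinearSeries.coeff_iterate_fslope (p := p) n 0
  rw [zero_add] at hcoeff
  rw [← hp.factorial_smul_coeff, ← hcoeff]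
  congr 1
  exact ((hp.has_fpower_series_iterate_dslope_fslope n).coeff_zero 1).symm

end IterateDslope

theorem factor_zero_of_order_general (f : ℂ → ℂ) (hf : MemS2 f) (w : ℂ) (hw : w ∈ ball (0:ℂ) 1)
    (n : ℕ)
    (hzero : ∀ k < n, iteratedDeriv k f w = 0) (hnz : iteratedDeriv n f w ≠ 0) :
    ∃ g : ℂ → ℂ, MemS2 g ∧ g w ≠ 0 ∧ ∀ z ∈ ball (0:ℂ) 1, f z = (z - w) ^ n * g z := by
  have hfw : AnalyticAt ℂ f w := hf.1.analyticAt (isOpen_ball.mem_nhds hw)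
  refine ⟨(swap dslope w)^[n] f, memS2_iterate_dslope hf hw n, fun hg => ?_, fun z _ => ?_⟩
  · rw [← hfw.factorial_smul_iterate_dslope_apply_self, hg, smul_zero] at hnz
    exact hnz rfl
  · refine (pow_sub_smul_iterate_dslope_of_zero n (fun k hk => ?_) z).symm
    have hk' := hfw.factorial_smul_iterate_dslope_apply_self k
    rw [hzero k hk, smul_eq_zero] at hk'
    exact hk'.resolve_left (Nat.cast_ne_zero.2 k.factorial_ne_zero)

theorem factor_zero_of_order (f : ℂ → ℂ) (hf : MemS2 f) (w : ℂ) (hw : w ∈ ball (0:ℂ) 1)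
    (n : ℕ) (hn : 1 ≤ n)
    (hzero : ∀ k < n, iteratedDeriv k f w = 0) (hnz : iteratedDeriv n f w ≠ 0) :
    ∃ g : ℂ → ℂ, MemS2 g ∧ g w ≠ 0 ∧ ∀ z ∈ ball (0:ℂ) 1, f z = (z - w) ^ n * g z :=
  factor_zero_of_order_general f hf w hw n hzero hnz
end

section
/- For each w in the open unit disk, the kernel of the evaluation functional ev_w on S^2 equals the range of the operator M_z − wI, where M_z is multiplication by the identity function; that is, f ∈ S^2 satisfies f(w) = 0 if and only if f(z) = (z−w)g(z) for some g ∈ S^2. -/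
open Metric Filter

/-! If `f = ∑ aₙ zⁿ` and `bₙ = ∑ₖ aₙ₊₁₊ₖ wᵏ`, then `f z = f w + (z - w) ∑ bₙ zⁿ` on the disk, by
the coefficient recursion `bₙ = aₙ₊₁ + w bₙ₊₁`. What remains is `∑ n² |bₙ|² < ∞`: the bound
`n |bₙ| ≤ ∑ₖ (n+1+k) |aₙ₊₁₊ₖ| |w|ᵏ` exhibits `n |bₙ|` as dominated by an `ℓ²` sequence averaged
against the summable weights `|w|ᵏ`, and Cauchy–Schwarz with these weights keeps it in `ℓ²`. -/

open FormalMultilinearSeries Topology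

theorem sq_tsum_mul_le_tsum_sq_mul_tsum_sq {ι : Type*} {f g : ι → ℝ} (hf : ∀ i, 0 ≤ f i)
    (hg : ∀ i, 0 ≤ g i) (hf2 : Summable fun i => f i ^ 2) (hg2 : Summable fun i => g i ^ 2) :
    (∑' i, f i * g i) ^ 2 ≤ (∑' i, f i ^ 2) * ∑' i, g i ^ 2 := by
  have h := Real.inner_le_Lp_mul_Lq_tsum_of_nonneg Real.HolderConjugate.two_two hf hg
    (by simpa using hf2) (by simpa using hg2)
  simp only [Real.rpow_two, ← Real.sqrt_eq_rpow,
    ← Real.sqrt_mul (tsum_nonneg fun i => sq_nonneg (f i))] at h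
  exact (Real.le_sqrt (tsum_nonneg fun i => mul_nonneg (hf i) (hg i))
    (mul_nonneg (tsum_nonneg fun i => sq_nonneg _) (tsum_nonneg fun i => sq_nonneg _))).1 h

theorem summable_shift_mul_geometric {c : ℕ → ℝ} {r : ℝ} (hc0 : ∀ n, 0 ≤ c n)
    (hc : Summable fun n => c n ^ 2) (hr0 : 0 ≤ r) (hr1 : r < 1) (m : ℕ) :
    Summable fun k => c (m + k) * r ^ k := by
  have hgeo : Summable fun k => (r ^ k) ^ 2 :=
    (summable_geometric_of_lt_one (sq_nonneg r) (pow_lt_one₀ hr0 hr1 two_ne_zero)).congr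
      fun k => by ring
  refine Real.summable_mul_of_Lp_Lq_of_nonneg Real.HolderConjugate.two_two (fun k => hc0 _)
    (fun k => pow_nonneg hr0 k) ?_ (by simpa using hgeo)
  simpa [add_comm m] using (summable_nat_add_iff m).mpr hc

theorem summable_sq_tsum_shift_mul_geometric {c : ℕ → ℝ} {r : ℝ} (hc0 : ∀ n, 0 ≤ c n)
    (hc : Summable fun n => c n ^ 2) (hr0 : 0 ≤ r) (hr1 : r < 1) :
    Summable fun n => (∑' k, c (n + k) * r ^ k) ^ 2 := by
  have hgeo : Summable fun k => r ^ k := summable_geometric_of_lt_one hr0 hr1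
  have hdouble : Summable fun q : ℕ × ℕ => c (q.1 + q.2) ^ 2 * r ^ q.2 := by
    have hinj : Function.Injective fun q : ℕ × ℕ => (q.1 + q.2, q.2) := by
      rintro ⟨n, k⟩ ⟨n', k'⟩ h
      simp only [Prod.mk.injEq] at h
      ext <;> omega
    exact ((hc.mul_of_nonneg hgeo (fun n => sq_nonneg (c n)) fun k => pow_nonneg hr0 k
      ).comp_injective hinj).congr fun q => rfl
  have hsqrt : ∀ k : ℕ, (√r ^ k) ^ 2 = r ^ k := fun k => by
    rw [← pow_mul, mul_comm, pow_mul, Real.sq_sqrt hr0]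
  have hcs : ∀ n, (∑' k, c (n + k) * r ^ k) ^ 2 ≤ (1 - r)⁻¹ * ∑' k, c (n + k) ^ 2 * r ^ k := by
    intro n
    have h := sq_tsum_mul_le_tsum_sq_mul_tsum_sq (f := fun k => √r ^ k)
      (g := fun k => c (n + k) * √r ^ k) (fun k => by positivity)
      (fun k => mul_nonneg (hc0 _) (by positivity)) (by simpa only [hsqrt] using hgeo)
      (by simpa only [mul_pow, hsqrt] using hdouble.prod_factor n)
    simp only [mul_pow, hsqrt, tsum_geometric_of_lt_one hr0 hr1] at h
    convert h using 4 with k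
    rw [mul_left_comm, ← mul_pow, Real.mul_self_sqrt hr0]
  exact Summable.of_nonneg_of_le (fun n => sq_nonneg _) hcs (hdouble.prod.mul_left _)

theorem hasSum_mul_pow_of_eq_add_mul {R : Type*} [CommRing R] [TopologicalSpace R]
    [IsTopologicalRing R] {a b : ℕ → R} {w z G : R} (hrec : ∀ n, b n = a (n + 1) + w * b (n + 1))
    (hG : HasSum (fun n => b n * z ^ n) G) :
    HasSum (fun n => a n * z ^ n) (a 0 + w * b 0 + (z - w) * G) := by
  have hshift : HasSum (fun n => b (n + 1) * z ^ (n + 1)) (G - b 0) := by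
    simpa using (hasSum_nat_add_iff' (f := fun n => b n * z ^ n) 1).mpr hG
  have htail : HasSum (fun n => a (n + 1) * z ^ (n + 1)) (z * G - w * (G - b 0)) :=
    ((hG.mul_left z).sub (hshift.mul_left w)).congr_fun fun n => by rw [hrec n]; ring
  have h := (hasSum_nat_add_iff (f := fun n => a n * z ^ n) 1).mp htail
  rwa [Finset.sum_range_one, pow_zero, mul_one,
    show z * G - w * (G - b 0) + a 0 = a 0 + w * b 0 + (z - w) * G by ring] at h

theorem tendsto_norm_of_summable_sq_mul {E : Type*} [SeminormedAddCommGroup E] {b : ℕ → E}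
    (hb : Summable fun n : ℕ => (n : ℝ) ^ 2 * ‖b n‖ ^ 2) :
    Tendsto (fun n => ‖b n‖) atTop (𝓝 0) := by
  have h := hb.tendsto_atTop_zero.sqrt
  rw [Real.sqrt_zero] at h
  refine squeeze_zero' (Eventually.of_forall fun n => norm_nonneg _) ?_ h
  filter_upwards [eventually_ge_atTop 1] with n hn
  rw [← mul_pow, Real.sqrt_sq (by positivity)]
  exact le_mul_of_one_le_left (norm_nonneg _) (by exact_mod_cast hn)

theorem one_le_radius_ofScalars {𝕜 : Type*} [NontriviallyNormedField 𝕜] {b : ℕ → 𝕜}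
    (hb : Summable fun n : ℕ => (n : ℝ) ^ 2 * ‖b n‖ ^ 2) : 1 ≤ (ofScalars 𝕜 b).radius := by
  simpa using (ofScalars 𝕜 b).le_radius_of_tendsto (r := 1)
    (by simpa using tendsto_norm_of_summable_sq_mul hb)

section OfScalarsSum

variable {b : ℕ → ℂ}

theorem hasFPowerSeriesOnBall_ofScalarsSum (hb : 1 ≤ (ofScalars ℂ b).radius) :
    HasFPowerSeriesOnBall (ofScalarsSum b) (ofScalars ℂ b) 0 1 :=
  ((ofScalars ℂ b).hasFPowerSeriesOnBall (zero_lt_one.trans_le hb)).mono zero_lt_one hb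

theorem hasSum_ofScalarsSum (hb : 1 ≤ (ofScalars ℂ b).radius) {z : ℂ} (hz : z ∈ ball (0 : ℂ) 1) :
    HasSum (fun n => b n * z ^ n) (ofScalarsSum b z) := by
  have h := (hasFPowerSeriesOnBall_ofScalarsSum hb).hasSum
    (by rwa [← ENNReal.coe_one, Metric.eball_coe])
  simpa [ofScalars_apply_eq, mul_comm] using h

theorem taylorCoeff_ofScalarsSum (hb : 1 ≤ (ofScalars ℂ b).radius) (n : ℕ) :
    taylorCoeff (ofScalarsSum b) n = b n := by
  have h := (hasFPowerSeriesOnBall_ofScalarsSum hb).factorial_smul 1 n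
  rw [ofScalars_apply_eq, ← iteratedDeriv_eq_iteratedFDeriv] at h
  rw [taylorCoeff, ← h, one_pow, smul_eq_mul, mul_one, nsmul_eq_mul,
    mul_div_cancel_left₀ _ (Nat.cast_ne_zero.2 n.factorial_ne_zero)]

theorem memS2_ofScalarsSum (hb : Summable fun n : ℕ => (n : ℝ) ^ 2 * ‖b n‖ ^ 2) :
    MemS2 (ofScalarsSum b) := by
  have hR := one_le_radius_ofScalars hb
  refine ⟨fun z hz => ?_, fun z hz => ?_, ?_⟩
  · exact ((hasFPowerSeriesOnBall_ofScalarsSum hR).analyticAt_of_mem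
      (by rwa [← ENNReal.coe_one, Metric.eball_coe])).analyticWithinAt
  · simpa only [taylorCoeff_ofScalarsSum hR] using hasSum_ofScalarsSum hR hz
  · simpa only [taylorCoeff_ofScalarsSum hR] using hb

end OfScalarsSum

/-- If `f = ∑ aₙ zⁿ`, these are the Taylor coefficients of `(f z - f w) / (z - w)`. -/
noncomputable def dslopeCoeff (a : ℕ → ℂ) (w : ℂ) (n : ℕ) : ℂ :=
  ∑' k, a (n + 1 + k) * w ^ k

section DslopeCoeff

variable {a : ℕ → ℂ} {w : ℂ}

theorem summable_dslopeCoeff_terms (ha : Summable fun n : ℕ => (n : ℝ) ^ 2 * ‖a n‖ ^ 2)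
    (hw : ‖w‖ < 1) (n : ℕ) : Summable fun k => a (n + 1 + k) * w ^ k := by
  refine .of_norm_bounded (summable_shift_mul_geometric (c := fun m : ℕ => m * ‖a m‖)
    (fun m => by positivity) (by simpa only [mul_pow] using ha) (norm_nonneg w) hw (n + 1))
    fun k => ?_
  rw [norm_mul, norm_pow]
  gcongr
  exact le_mul_of_one_le_left (norm_nonneg _)
    (by exact_mod_cast Nat.le_add_right_of_le n.succ_pos)

theorem dslopeCoeff_eq_add_mul {n : ℕ} (hs : Summable fun k => a (n + 1 + k) * w ^ k) :
    dslopeCoeff a w n = a (n + 1) + w * dslopeCoeff a w (n + 1) := by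
  rw [dslopeCoeff, hs.tsum_eq_zero_add, dslopeCoeff, ← tsum_mul_left]
  congr 1
  · simp
  · refine tsum_congr fun k => ?_
    rw [show n + 1 + (k + 1) = n + 1 + 1 + k by omega, pow_succ]
    ring

theorem summable_sq_dslopeCoeff (ha : Summable fun n : ℕ => (n : ℝ) ^ 2 * ‖a n‖ ^ 2)
    (hw : ‖w‖ < 1) : Summable fun n : ℕ => (n : ℝ) ^ 2 * ‖dslopeCoeff a w n‖ ^ 2 := by
  set c : ℕ → ℝ := fun m => m * ‖a m‖
  have hc0 : ∀ m, 0 ≤ c m := fun m => by positivity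
  have hc : Summable fun m => c m ^ 2 := by simpa only [c, mul_pow] using ha
  refine .of_nonneg_of_le (fun n => by positivity) (fun n => ?_) ((summable_nat_add_iff 1).mpr
    (summable_sq_tsum_shift_mul_geometric hc0 hc (norm_nonneg w) hw))
  have hbound : ‖(n : ℂ) * dslopeCoeff a w n‖ ≤ ∑' k, c (n + 1 + k) * ‖w‖ ^ k := by
    rw [dslopeCoeff, ← tsum_mul_left]
    refine tsum_of_norm_bounded
      (summable_shift_mul_geometric hc0 hc (norm_nonneg w) hw (n + 1)).hasSum fun k => ?_
    rw [norm_mul, norm_mul, norm_pow, Complex.norm_natCast, ← mul_assoc]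
    simp only [c]
    gcongr
    exact_mod_cast Nat.le_add_right_of_le n.le_succ
  rw [norm_mul, Complex.norm_natCast] at hbound
  rw [← mul_pow]
  gcongr

end DslopeCoeff

theorem MemS2.exists_eq_add_sub_mul {f : ℂ → ℂ} (hf : MemS2 f) {w : ℂ} (hw : w ∈ ball (0 : ℂ) 1) :
    ∃ g, MemS2 g ∧ ∀ z ∈ ball (0 : ℂ) 1, f z = f w + (z - w) * g z := by
  obtain ⟨-, hfs, hfsum⟩ := hf
  have hw' : ‖w‖ < 1 := mem_ball_zero_iff.mp hw
  set b := dslopeCoeff (taylorCoeff f) w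
  have hb := summable_sq_dslopeCoeff hfsum hw'
  have hexpand : ∀ z ∈ ball (0 : ℂ) 1,
      f z = taylorCoeff f 0 + w * b 0 + (z - w) * ofScalarsSum b z := fun z hz =>
    (hfs z hz).unique <| hasSum_mul_pow_of_eq_add_mul
      (fun n => dslopeCoeff_eq_add_mul (summable_dslopeCoeff_terms hfsum hw' n))
      (hasSum_ofScalarsSum (one_le_radius_ofScalars hb) hz)
  refine ⟨ofScalarsSum b, memS2_ofScalarsSum hb, fun z hz => ?_⟩
  rw [hexpand z hz, hexpand w hw, sub_self, zero_mul, add_zero]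

theorem ker_ev_eq_range_shift (w : ℂ) (hw : w ∈ ball (0:ℂ) 1)
    (f : ℂ → ℂ) (hf : MemS2 f) :
    f w = 0 ↔ ∃ g : ℂ → ℂ, MemS2 g ∧ ∀ z ∈ ball (0:ℂ) 1, f z = (z - w) * g z := by
  constructor
  · intro hfw
    obtain ⟨g, hg, hfg⟩ := hf.exists_eq_add_sub_mul hw
    exact ⟨g, hg, fun z hz => by rw [hfg z hz, hfw, zero_add]⟩
  · rintro ⟨g, -, hfg⟩
    rw [hfg w hw, sub_self, zero_mul]
end

section
/- The multiplication operator M_ψ is compact on S^2 if and only if ψ is identically zero. -/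
open Metric Filter

/-- Compactness of an operator on `S²`: every bounded sequence has a subsequence
whose image converges in the `S²` norm. -/
def CompactOpS2 (T : (ℂ → ℂ) → (ℂ → ℂ)) : Prop :=
  ∀ f : ℕ → (ℂ → ℂ), (∀ k, MemS2 (f k) ∧ s2Norm (f k) ≤ 1) →
    ∃ σ : ℕ → ℕ, StrictMono σ ∧ ∃ g : ℂ → ℂ, MemS2 g ∧
      Tendsto (fun k => s2Norm (T (f (σ k)) - g)) atTop (nhds 0)

/-!
The normalized monomials `u k = z ^ (k + 1) / (k + 1)` lie in the unit ball of `S²`, and each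
Taylor coefficient of `ψ * u k` vanishes once `k` is large. Hence an `S²`-limit `G` of a
subsequence `ψ * u (σ k)` has all Taylor coefficients zero. On the other hand `ψ * u k` has the
coefficient `a j / (k + 1)` at `z ^ (j + k + 1)`, which the `S²`-norm weighs by `j + k + 1`, so
`‖ψ * u k - G‖ ≥ |a j|` for every Taylor coefficient `a j` of `ψ`. Compactness thus forces
`ψ = 0`; conversely, the zero operator is compact.
-/

open Topology

theorem eball_one_eq_ball {α : Type*} [PseudoMetricSpace α] (x : α) : eball x 1 = ball x 1 := by
  rw [← ENNReal.ofReal_one, eball_ofReal]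

section PowerSeries

variable {F : ℂ → ℂ} {c : ℕ → ℂ}

theorem hasFPowerSeriesOnBall_ofScalars_of_hasSum
    (hc : ∀ z ∈ ball (0:ℂ) 1, HasSum (fun n => c n * z ^ n) (F z)) :
    HasFPowerSeriesOnBall F (FormalMultilinearSeries.ofScalars ℂ c) 0 1 where
  r_le := by
    refine ENNReal.le_of_forall_nnreal_lt fun r hr => ?_
    have hr' : (r : ℂ) ∈ ball (0:ℂ) 1 := by simpa using hr
    refine FormalMultilinearSeries.le_radius_of_tendsto _ (l := 0) ?_
    simpa [FormalMultilinearSeries.ofScalars_norm] using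
      (hc _ hr').summable.tendsto_atTop_zero.norm
  r_pos := one_pos
  hasSum hy := by
    rw [eball_one_eq_ball] at hy
    simpa [FormalMultilinearSeries.ofScalars_apply_eq, mul_comm] using hc _ hy

theorem taylorCoeff_eq_of_hasSum
    (hc : ∀ z ∈ ball (0:ℂ) 1, HasSum (fun n => c n * z ^ n) (F z)) (n : ℕ) :
    taylorCoeff F n = c n := by
  have h := (hasFPowerSeriesOnBall_ofScalars_of_hasSum hc).factorial_smul 1 n
  simp only [FormalMultilinearSeries.ofScalars_apply_eq, one_pow, smul_eq_mul, mul_one,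
    nsmul_eq_mul] at h
  rw [taylorCoeff, iteratedDeriv_eq_iteratedFDeriv, ← h]
  exact mul_div_cancel_left₀ _ (by exact_mod_cast n.factorial_ne_zero)

theorem memS2_of_hasSum
    (hc : ∀ z ∈ ball (0:ℂ) 1, HasSum (fun n => c n * z ^ n) (F z))
    (hs : Summable fun n : ℕ => (n:ℝ) ^ 2 * ‖c n‖ ^ 2) : MemS2 F := by
  have hcoeff : taylorCoeff F = c := funext (taylorCoeff_eq_of_hasSum hc)
  refine ⟨?_, by rwa [hcoeff], by rwa [hcoeff]⟩
  simpa only [eball_one_eq_ball] using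
    (hasFPowerSeriesOnBall_ofScalars_of_hasSum hc).analyticOnNhd.analyticOn

end PowerSeries

section ShiftCoeff

variable {E : Type*} [Zero E] {a : ℕ → E}

/-- The coefficients of `z ^ m * f z`, given those of `f`. -/
def shiftCoeff (m : ℕ) (a : ℕ → E) (n : ℕ) : E := if m ≤ n then a (n - m) else 0

theorem shiftCoeff_add (m j : ℕ) : shiftCoeff m a (j + m) = a j := by
  simp [shiftCoeff]

theorem shiftCoeff_of_lt {m n : ℕ} (h : n < m) : shiftCoeff m a n = 0 :=
  if_neg (not_le.mpr h)

end ShiftCoeff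

section WeightedSequences

variable {E : Type*} [SeminormedAddCommGroup E] {a b : ℕ → E}

theorem summable_sq_norm_of_summable_natCast_sq_mul
    (ha : Summable fun n : ℕ => (n:ℝ) ^ 2 * ‖a n‖ ^ 2) :
    Summable fun n => ‖a n‖ ^ 2 := by
  refine (summable_nat_add_iff 1).mp <| .of_nonneg_of_le (fun _ => by positivity) (fun n => ?_)
    ((summable_nat_add_iff 1).mpr ha)
  exact le_mul_of_one_le_left (by positivity) (one_le_pow₀ (by simp))

theorem summable_natCast_sq_mul_norm_sub_sq
    (ha : Summable fun n : ℕ => (n:ℝ) ^ 2 * ‖a n‖ ^ 2)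
    (hb : Summable fun n : ℕ => (n:ℝ) ^ 2 * ‖b n‖ ^ 2) :
    Summable fun n : ℕ => (n:ℝ) ^ 2 * ‖a n - b n‖ ^ 2 := by
  refine .of_nonneg_of_le (fun _ => by positivity) (fun n => ?_) ((ha.add hb).mul_left 2)
  calc (n:ℝ) ^ 2 * ‖a n - b n‖ ^ 2 ≤ n ^ 2 * (2 * (‖a n‖ ^ 2 + ‖b n‖ ^ 2)) := by
        gcongr
        exact (pow_le_pow_left₀ (norm_nonneg _) (norm_sub_le _ _) 2).trans add_sq_le
    _ = 2 * (n ^ 2 * ‖a n‖ ^ 2 + n ^ 2 * ‖b n‖ ^ 2) := by ring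

theorem summable_natCast_sq_mul_norm_shiftCoeff_sq (m : ℕ)
    (ha : Summable fun n : ℕ => (n:ℝ) ^ 2 * ‖a n‖ ^ 2) :
    Summable fun n : ℕ => (n:ℝ) ^ 2 * ‖shiftCoeff m a n‖ ^ 2 := by
  refine (summable_nat_add_iff m).mp ?_
  simp only [shiftCoeff_add, Nat.cast_add]
  refine .of_nonneg_of_le (fun _ => by positivity) (fun n => ?_)
    ((ha.add ((summable_sq_norm_of_summable_natCast_sq_mul ha).mul_left ((m:ℝ) ^ 2))).mul_left 2)
  calc ((n:ℝ) + m) ^ 2 * ‖a n‖ ^ 2 ≤ 2 * (n ^ 2 + m ^ 2) * ‖a n‖ ^ 2 := by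
        gcongr; exact add_sq_le
    _ = 2 * (n ^ 2 * ‖a n‖ ^ 2 + m ^ 2 * ‖a n‖ ^ 2) := by ring

end WeightedSequences

theorem hasSum_shiftCoeff_mul_pow {R : Type*} [CommRing R] [TopologicalSpace R]
    [IsTopologicalRing R] {a : ℕ → R} {s z : R} (h : HasSum (fun n => a n * z ^ n) s)
    (m : ℕ) : HasSum (fun n => shiftCoeff m a n * z ^ n) (z ^ m * s) := by
  have h' : HasSum (fun n => shiftCoeff m a (n + m) * z ^ (n + m)) (z ^ m * s) := by
    have e : (fun n => shiftCoeff m a (n + m) * z ^ (n + m)) = fun n => z ^ m * (a n * z ^ n) :=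
      funext fun n => by rw [shiftCoeff_add, pow_add]; ring
    exact e ▸ h.mul_left (z ^ m)
  refine (hasSum_nat_add_iff' m).mp ?_
  rwa [Finset.sum_eq_zero fun i hi => by rw [shiftCoeff_of_lt (Finset.mem_range.mp hi), zero_mul],
    sub_zero]

theorem hasSum_ite_eq_mul_pow {R : Type*} [Semiring R] [TopologicalSpace R] (c z : R) (m : ℕ) :
    HasSum (fun n => (if n = m then c else 0) * z ^ n) (c * z ^ m) := by
  convert hasSum_ite_eq m (c * z ^ m) using 2 with n
  split_ifs with h <;> simp [h]

section S2

variable {f g : ℂ → ℂ}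

theorem taylorCoeff_const_mul (c : ℂ) (f : ℂ → ℂ) (n : ℕ) :
    taylorCoeff (fun z => c * f z) n = c * taylorCoeff f n := by
  simp only [taylorCoeff, iteratedDeriv_const_mul_field, mul_div_assoc]

theorem MemS2.const_mul (hf : MemS2 f) (c : ℂ) : MemS2 (fun z => c * f z) := by
  refine memS2_of_hasSum (c := fun n => c * taylorCoeff f n)
    (fun z hz => ((hf.2.1 z hz).mul_left c).congr_fun fun n => mul_assoc _ _ _) ?_
  exact (hf.2.2.mul_left (‖c‖ ^ 2)).congr fun n => by rw [norm_mul, mul_pow]; ring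

theorem taylorCoeff_pow_mul (hf : MemS2 f) (m n : ℕ) :
    taylorCoeff (fun z => z ^ m * f z) n = shiftCoeff m (taylorCoeff f) n :=
  taylorCoeff_eq_of_hasSum (fun z hz => hasSum_shiftCoeff_mul_pow (hf.2.1 z hz) m) n

theorem MemS2.pow_mul (hf : MemS2 f) (m : ℕ) : MemS2 (fun z => z ^ m * f z) :=
  memS2_of_hasSum (fun z hz => hasSum_shiftCoeff_mul_pow (hf.2.1 z hz) m)
    (summable_natCast_sq_mul_norm_shiftCoeff_sq m hf.2.2)

theorem MemS2.hasSum_sub (hf : MemS2 f) (hg : MemS2 g) {z : ℂ} (hz : z ∈ ball (0:ℂ) 1) :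
    HasSum (fun n => (taylorCoeff f n - taylorCoeff g n) * z ^ n) ((f - g) z) :=
  ((hf.2.1 z hz).sub (hg.2.1 z hz)).congr_fun fun _ => sub_mul _ _ _

theorem taylorCoeff_sub (hf : MemS2 f) (hg : MemS2 g) (n : ℕ) :
    taylorCoeff (f - g) n = taylorCoeff f n - taylorCoeff g n :=
  taylorCoeff_eq_of_hasSum (fun _ hz => hf.hasSum_sub hg hz) n

theorem MemS2.sub (hf : MemS2 f) (hg : MemS2 g) : MemS2 (f - g) :=
  memS2_of_hasSum (fun _ hz => hf.hasSum_sub hg hz)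
    (summable_natCast_sq_mul_norm_sub_sq hf.2.2 hg.2.2)

theorem memS2_const_mul_pow (c : ℂ) (m : ℕ) : MemS2 (fun z => c * z ^ m) :=
  memS2_of_hasSum (fun z _ => hasSum_ite_eq_mul_pow c z m) <|
    summable_of_ne_finset_zero (s := {m}) fun n hn => by simp [if_neg (by simpa using hn)]

theorem memS2_zero : MemS2 fun _ => 0 := by
  simpa using memS2_const_mul_pow 0 0

theorem s2Norm_const_mul_pow_succ (c : ℂ) (k : ℕ) :
    s2Norm (fun z => c * z ^ (k + 1)) = (k + 1) * ‖c‖ := by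
  have hcoeff := taylorCoeff_eq_of_hasSum fun z _ => hasSum_ite_eq_mul_pow c z (k + 1)
  rw [s2Norm, s2NormSq, tsum_eq_single k fun n hn => by simp [hcoeff, hn]]
  simp [hcoeff, Real.sqrt_sq (by positivity : (0:ℝ) ≤ k + 1)]

theorem s2Norm_eq_zero_of_eqOn_zero (hf : ∀ z ∈ ball (0:ℂ) 1, f z = 0) : s2Norm f = 0 := by
  have hcoeff := taylorCoeff_eq_of_hasSum (F := f) (c := 0) fun z hz => by simp [hf z hz]
  simp [s2Norm, s2NormSq, hcoeff]

theorem s2NormSq_nonneg (f : ℂ → ℂ) : 0 ≤ s2NormSq f :=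
  add_nonneg (sq_nonneg _) (tsum_nonneg fun _ => by positivity)

theorem natCast_mul_norm_taylorCoeff_le_s2Norm
    (hf : Summable fun n : ℕ => (n:ℝ) ^ 2 * ‖taylorCoeff f n‖ ^ 2) (n : ℕ) :
    n * ‖taylorCoeff f n‖ ≤ s2Norm f := by
  rcases n with _ | k
  · rw [Nat.cast_zero, zero_mul]
    exact Real.sqrt_nonneg _
  have hs : Summable fun k : ℕ => ((k:ℝ) + 1) ^ 2 * ‖taylorCoeff f (k + 1)‖ ^ 2 := by
    simpa using (summable_nat_add_iff 1).mpr hf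
  rw [s2Norm, Real.le_sqrt (by positivity) (s2NormSq_nonneg f), mul_pow]
  push_cast
  exact (hs.le_tsum k fun _ _ => by positivity).trans (le_add_of_nonneg_left (by positivity))

theorem norm_taylorCoeff_le_s2Norm
    (hf : Summable fun n : ℕ => (n:ℝ) ^ 2 * ‖taylorCoeff f n‖ ^ 2) (n : ℕ) :
    ‖taylorCoeff f n‖ ≤ s2Norm f := by
  rcases n with _ | k
  · exact Real.le_sqrt_of_sq_le (le_add_of_nonneg_right (tsum_nonneg fun _ => by positivity))
  · refine le_trans ?_ (natCast_mul_norm_taylorCoeff_le_s2Norm hf (k + 1))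
    exact le_mul_of_one_le_left (norm_nonneg _) (by simp)

end S2

theorem taylorCoeff_eq_zero_of_tendsto_s2Norm_sub {F : ℕ → ℂ → ℂ} {G : ℂ → ℂ}
    (hF : ∀ k, MemS2 (F k)) (hG : MemS2 G)
    (hF0 : ∀ n, ∀ᶠ k in atTop, taylorCoeff (F k) n = 0)
    (hlim : Tendsto (fun k => s2Norm (F k - G)) atTop (𝓝 0)) (n : ℕ) :
    taylorCoeff G n = 0 := by
  refine norm_le_zero_iff.mp (ge_of_tendsto hlim ?_)
  filter_upwards [hF0 n] with k hk
  simpa [taylorCoeff_sub (hF k) hG, hk] using norm_taylorCoeff_le_s2Norm ((hF k).sub hG).2.2 n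

theorem taylorCoeff_eq_zero_of_compactOpS2_mul {ψ : ℂ → ℂ} (hψ : MemS2 ψ)
    (hT : CompactOpS2 fun f z => ψ z * f z) (j : ℕ) : taylorCoeff ψ j = 0 := by
  set u : ℕ → ℂ → ℂ := fun k z => ((k + 1 : ℕ) : ℂ)⁻¹ * z ^ (k + 1)
  have hu : ∀ k, MemS2 (u k) ∧ s2Norm (u k) ≤ 1 := fun k =>
    ⟨memS2_const_mul_pow _ _, by
      rw [s2Norm_const_mul_pow_succ, norm_inv, Complex.norm_natCast, Nat.cast_add_one,
        mul_inv_cancel₀ (by positivity)]⟩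
  obtain ⟨σ, hσ, G, hG, hlim⟩ := hT u hu
  set F : ℕ → ℂ → ℂ := fun k z => ((σ k + 1 : ℕ) : ℂ)⁻¹ * (z ^ (σ k + 1) * ψ z)
  have hFu : ∀ k, (fun z => ψ z * u (σ k) z) = F k := fun k => funext fun z => by
    simp only [u, F]; ring
  simp only [hFu] at hlim
  have hF : ∀ k, MemS2 (F k) := fun k => (hψ.pow_mul _).const_mul _
  have hcoeff : ∀ k n, taylorCoeff (F k) n =
      ((σ k + 1 : ℕ) : ℂ)⁻¹ * shiftCoeff (σ k + 1) (taylorCoeff ψ) n := fun k n => by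
    rw [taylorCoeff_const_mul, taylorCoeff_pow_mul hψ]
  have hG0 : ∀ n, taylorCoeff G n = 0 := by
    refine taylorCoeff_eq_zero_of_tendsto_s2Norm_sub hF hG (fun n => ?_) hlim
    filter_upwards [eventually_ge_atTop n] with k hk
    rw [hcoeff, shiftCoeff_of_lt (by linarith [hσ.le_apply (x := k)]), mul_zero]
  have hbound : ∀ k, ‖taylorCoeff ψ j‖ ≤ s2Norm (F k - G) := fun k => by
    have h := natCast_mul_norm_taylorCoeff_le_s2Norm ((hF k).sub hG).2.2 (j + (σ k + 1))
    rw [taylorCoeff_sub (hF k) hG, hG0, sub_zero, hcoeff, shiftCoeff_add, norm_mul] at h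
    refine le_trans ?_ h
    rw [norm_inv, Complex.norm_natCast, ← mul_assoc]
    refine le_mul_of_one_le_left (norm_nonneg _) ?_
    rw [← div_eq_mul_inv, one_le_div (by positivity)]
    exact_mod_cast Nat.le_add_left _ _
  exact norm_le_zero_iff.mp (ge_of_tendsto' hlim hbound)

theorem multiplication_compact_iff (ψ : ℂ → ℂ) (hψ : MemS2 ψ) :
    CompactOpS2 (fun f => fun z => ψ z * f z) ↔ ∀ z ∈ ball (0:ℂ) 1, ψ z = 0 := by
  constructor
  · intro hT z hz
    have h := hψ.2.1 z hz
    simp only [taylorCoeff_eq_zero_of_compactOpS2_mul hψ hT, zero_mul] at h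
    exact h.unique hasSum_zero
  · intro hψ0 f _
    refine ⟨id, strictMono_id, fun _ => 0, memS2_zero, tendsto_const_nhds.congr fun k => ?_⟩
    exact (s2Norm_eq_zero_of_eqOn_zero fun z hz => by simp [hψ0 z hz]).symm
end
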